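/- arXiv:math/9806126 — 3 statements merged into one kernel-verified Lean document; each statement's English description precedes it below -/
import Mathlib

section
/- For every n ∈ ℕ and every array u : Fin n → Fin n → Fin n → ℂ satisfying u i j k = u i k j for all i, j, k, the real number Re(Σ_{i,j,k} u^i_{jk} · conj(u^j_{ik})) + Σ_{i,j,k} |u^j_{ik}|² is nonnegative, and it is strictly positive whenever u ≠ 0. (This positive definiteness of the hermitian form Θ is the analytic content of the paper's Proposition 3.2: the twisted tautological quotient bundle Q_n(1) on the Lagrangian Grassmannian LG_n is Nakano positive.) -/
/-!
Completing the square, `Θ(u) = ½ Σ |u^i_{jk} + u^j_{ik}|²`, so `Θ ≥ 0`. If `Θ(u) = 0` then `u` is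
antisymmetric in its first two indices and symmetric in its last two; such an array vanishes,
since alternating the two symmetries around the three indices gives `u^i_{jk} = -u^i_{jk}`.
-/

open Finset ComplexConjugate

section AntisymmSymm

variable {ι M : Type*} [AddCommGroup M] [IsAddTorsionFree M]

theorem eq_zero_of_add_swap_eq_zero_of_symm {u : ι → ι → ι → M}
    (hsym : ∀ i j k, u i j k = u i k j) (hanti : ∀ i j k, u i j k + u j i k = 0) : u = 0 := by
  funext i j k
  have hcycle : u i j k = -u i j k :=
    calc u i j k = -u j i k := eq_neg_of_add_eq_zero_left (hanti i j k)
      _ = -u j k i := by rw [hsym j i k]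
      _ = u k j i := by rw [← eq_neg_of_add_eq_zero_left (hanti k j i)]
      _ = u k i j := hsym k j i
      _ = -u i k j := eq_neg_of_add_eq_zero_left (hanti k i j)
      _ = -u i j k := by rw [hsym i k j]
  exact two_nsmul_eq_zero.mp (by rw [two_nsmul]; exact add_eq_zero_iff_eq_neg.mpr hcycle)

end AntisymmSymm

section CurvatureForm

variable {ι κ : Type*} [Fintype ι] [Fintype κ]

/-- The paper's form `Θ`, with `u i j k = u^i_{jk}`. -/
noncomputable def curvatureForm (u : ι → ι → κ → ℂ) : ℝ :=
  (∑ i, ∑ j, ∑ k, u i j k * conj (u j i k)).re + ∑ i, ∑ j, ∑ k, ‖u j i k‖ ^ 2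

theorem curvatureForm_eq_half_sum_sq_norm (u : ι → ι → κ → ℂ) :
    curvatureForm u = (∑ i, ∑ j, ∑ k, ‖u i j k + u j i k‖ ^ 2) / 2 := by
  have hswap : ∑ i, ∑ j, ∑ k, ‖u j i k‖ ^ 2 = ∑ i, ∑ j, ∑ k, ‖u i j k‖ ^ 2 := sum_comm
  have hexpand : ∀ i j k, ‖u i j k + u j i k‖ ^ 2 =
      ‖u i j k‖ ^ 2 + ‖u j i k‖ ^ 2 + 2 * (u i j k * conj (u j i k)).re := by
    intro i j k
    simp only [Complex.sq_norm, Complex.normSq_add]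
  simp only [curvatureForm, hexpand, sum_add_distrib, ← mul_sum, Complex.re_sum, hswap]
  ring

theorem curvatureForm_nonneg (u : ι → ι → κ → ℂ) : 0 ≤ curvatureForm u := by
  rw [curvatureForm_eq_half_sum_sq_norm]
  positivity

theorem curvatureForm_pos {u : ι → ι → ι → ℂ} (hsym : ∀ i j k, u i j k = u i k j) (hu : u ≠ 0) :
    0 < curvatureForm u := by
  obtain ⟨i, j, k, hijk⟩ : ∃ i j k, u i j k + u j i k ≠ 0 := by
    by_contra! hanti
    exact hu (eq_zero_of_add_swap_eq_zero_of_symm hsym hanti)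
  rw [curvatureForm_eq_half_sum_sq_norm]
  refine half_pos (sum_pos' (fun _ _ => by positivity) ⟨i, mem_univ _, ?_⟩)
  refine sum_pos' (fun _ _ => by positivity) ⟨j, mem_univ _, ?_⟩
  exact sum_pos' (fun _ _ => by positivity) ⟨k, mem_univ _, by positivity⟩

end CurvatureForm

/-- The hermitian form `Θ(u) = Re (Σ_{i,j,k} u^i_{jk} conj(u^j_{ik})) + Σ_{i,j,k} |u^j_{ik}|²`
(the curvature `Θ_{Q_n(1)}` of the twisted tautological quotient bundle on the Lagrangian
Grassmannian `LG_n`) is positive semidefinite on arrays symmetric in the lower indices,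
and positive definite: it vanishes only at `u = 0`. -/
theorem lagrangian_curvature_pos_def (n : ℕ) (u : Fin n → Fin n → Fin n → ℂ)
    (hsym : ∀ i j k, u i j k = u i k j) :
    0 ≤ (∑ i : Fin n, ∑ j : Fin n, ∑ k : Fin n,
          u i j k * (starRingEnd ℂ) (u j i k)).re +
        ∑ i : Fin n, ∑ j : Fin n, ∑ k : Fin n, ‖u j i k‖ ^ 2 ∧
    (u ≠ 0 →
      0 < (∑ i : Fin n, ∑ j : Fin n, ∑ k : Fin n,
            u i j k * (starRingEnd ℂ) (u j i k)).re +
          ∑ i : Fin n, ∑ j : Fin n, ∑ k : Fin n, ‖u j i k‖ ^ 2) :=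
  ⟨curvatureForm_nonneg u, curvatureForm_pos hsym⟩
end

section
/- For every n ∈ ℕ and every array u : Fin n → Fin n → Fin n → ℂ satisfying u i j k = u i k j for all i, j, k, the following identity of complex numbers holds (the right-hand side being a real number coerced to ℂ): Σ_{i,j,k} (u^i_{jk} · conj(u^j_{ik}) + |u^j_{ik}|²) = Σ_{i<j<k} (|u^i_{jk} + u^j_{ik} + u^k_{ij}|² + |u^i_{jk}|² + |u^j_{ik}|² + |u^k_{ij}|²) + Σ_{i≠j} (|u^i_{jj} + u^j_{ij}|² + 2|u^j_{ij}|²) + Σ_i 2|u^i_{ii}|². -/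
/-!
Every term of `Θ(u)` is indexed by a triple `(i, j, k)`, and the triples fall into the orbits of
`S₃` acting on the indices: those with three distinct entries, those with exactly two equal
entries, and the diagonal. Summing the summand over an orbit and using the symmetry of `u` in
its lower indices, the cross terms `u^a_{bc} conj(u^b_{ac})` combine with the squared norms into
the squared norms of the right-hand side; e.g. on `{i, j, k}` distinct, with
`A, B, C = u^i_{jk}, u^j_{ik}, u^k_{ij}`, the orbit contributes
`Σ_{X ≠ Y} X conj Y + 2 (|A|² + |B|² + |C|²) = |A + B + C|² + |A|² + |B|² + |C|²`.
-/

open Finset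

section TripleSum

variable {α M : Type*} [Fintype α] [AddCommMonoid M]

theorem sum_sum_sum_comm₁₂ (f : α → α → α → M) :
    ∑ i, ∑ j, ∑ k, f j i k = ∑ i, ∑ j, ∑ k, f i j k :=
  sum_comm

theorem sum_sum_sum_comm₂₃ (f : α → α → α → M) :
    ∑ i, ∑ j, ∑ k, f i k j = ∑ i, ∑ j, ∑ k, f i j k :=
  sum_congr rfl fun _ _ => sum_comm

theorem sum_sum_sum_rotate (f : α → α → α → M) :
    ∑ i, ∑ j, ∑ k, f j k i = ∑ i, ∑ j, ∑ k, f i j k :=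
  sum_comm.trans (sum_sum_sum_comm₂₃ f)

theorem sum_sum_sum_rotate' (f : α → α → α → M) :
    ∑ i, ∑ j, ∑ k, f k i j = ∑ i, ∑ j, ∑ k, f i j k :=
  (sum_sum_sum_comm₂₃ fun i j k => f j i k).trans (sum_sum_sum_comm₁₂ f)

theorem sum_sum_sum_comm₁₃ (f : α → α → α → M) :
    ∑ i, ∑ j, ∑ k, f k j i = ∑ i, ∑ j, ∑ k, f i j k :=
  (sum_sum_sum_comm₂₃ fun i j k => f j k i).trans (sum_sum_sum_rotate f)

variable [LinearOrder α]

omit [Fintype α] in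
theorem eq_sum_ite_orderType (i j k : α) (a : M) :
    a = (if i < j ∧ j < k then a else 0) + (if i < k ∧ k < j then a else 0) +
      (if j < i ∧ i < k then a else 0) + (if j < k ∧ k < i then a else 0) +
      (if k < i ∧ i < j then a else 0) + (if k < j ∧ j < i then a else 0) +
      (if j = k ∧ i ≠ j then a else 0) + (if i = k ∧ i ≠ j then a else 0) +
      (if i = j ∧ j ≠ k then a else 0) + (if j = k ∧ i = j then a else 0) := by
  rcases lt_trichotomy i j with h₁ | h₁ | h₁ <;> rcases lt_trichotomy j k with h₂ | h₂ | h₂ <;>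
    rcases lt_trichotomy i k with h₃ | h₃ | h₃ <;>
    first
    | (exfalso; order)
    | simp [h₁, h₂, h₃, ne_of_lt, ne_of_gt, lt_asymm]

theorem sum_sum_sum_eq_sum_lt_lt_add_sum_ne_add_sum (F : α → α → α → M) :
    ∑ i, ∑ j, ∑ k, F i j k =
      (∑ i, ∑ j, ∑ k, if i < j ∧ j < k then
          F i j k + F i k j + F j i k + F j k i + F k i j + F k j i else 0) +
      (∑ i, ∑ j, if i ≠ j then F j j i + F j i j + F i j j else 0) +
      ∑ i, F i i i := by
  have h₂₃ := sum_sum_sum_comm₂₃ fun i j k => if i < k ∧ k < j then F i j k else 0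
  have h₁₂ := sum_sum_sum_comm₁₂ fun i j k => if j < i ∧ i < k then F i j k else 0
  have hrot' := sum_sum_sum_rotate' fun i j k => if j < k ∧ k < i then F i j k else 0
  have hrot := sum_sum_sum_rotate fun i j k => if k < i ∧ i < j then F i j k else 0
  have h₁₃ := sum_sum_sum_comm₁₃ fun i j k => if k < j ∧ j < i then F i j k else 0
  have hdiag₂₃ : ∑ i, ∑ j, ∑ k, (if j = k ∧ i ≠ j then F i j k else 0) =
      ∑ i, ∑ j, if i ≠ j then F i j j else 0 := by
    simp only [ite_and, sum_ite_eq, mem_univ, if_true]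
  have hdiag₁₃ : ∑ i, ∑ j, ∑ k, (if i = k ∧ i ≠ j then F i j k else 0) =
      ∑ i, ∑ j, if i ≠ j then F j i j else 0 := by
    simp only [ite_and, sum_ite_eq, mem_univ, if_true]
    exact sum_comm.trans
      (sum_congr rfl fun _ _ => sum_congr rfl fun _ _ => if_congr ne_comm rfl rfl)
  have hdiag₁₂ : ∑ i, ∑ j, ∑ k, (if i = j ∧ j ≠ k then F i j k else 0) =
      ∑ i, ∑ j, if i ≠ j then F j j i else 0 := by
    conv_lhs => enter [2, i]; rw [sum_comm]
    simp only [ite_and, sum_ite_eq, mem_univ, if_true]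
    exact sum_comm.trans
      (sum_congr rfl fun _ _ => sum_congr rfl fun _ _ => if_congr ne_comm rfl rfl)
  have hdiag : ∑ i, ∑ j, ∑ k, (if j = k ∧ i = j then F i j k else 0) = ∑ i, F i i i := by
    simp only [ite_and, sum_ite_eq, mem_univ, if_true]
  conv_lhs => enter [2, i, 2, j, 2, k]; rw [eq_sum_ite_orderType i j k (F i j k)]
  simp only [sum_add_distrib, ite_add_zero]
  rw [hdiag₂₃, hdiag₁₃, hdiag₁₂, hdiag, ← h₂₃, ← h₁₂, ← hrot', ← hrot, ← h₁₃]
  abel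

end TripleSum

section Curvature

variable {ι : Type*}

noncomputable def curvatureSummand (u : ι → ι → ι → ℂ) (i j k : ι) : ℂ :=
  u i j k * (starRingEnd ℂ) (u j i k) + ((‖u j i k‖ ^ 2 : ℝ) : ℂ)

variable {u : ι → ι → ι → ℂ}

theorem curvatureSummand_diag (i : ι) :
    curvatureSummand u i i i = ((2 * ‖u i i i‖ ^ 2 : ℝ) : ℂ) := by
  simp only [curvatureSummand, Complex.ofReal_mul, Complex.ofReal_ofNat,
    Complex.ofReal_pow, ← Complex.mul_conj']
  ring

variable (hsym : ∀ i j k, u i j k = u i k j)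
include hsym

theorem curvatureSummand_sum_perm (i j k : ι) :
    curvatureSummand u i j k + curvatureSummand u i k j + curvatureSummand u j i k +
        curvatureSummand u j k i + curvatureSummand u k i j + curvatureSummand u k j i =
      ((‖u i j k + u j i k + u k i j‖ ^ 2 + ‖u i j k‖ ^ 2 + ‖u j i k‖ ^ 2 + ‖u k i j‖ ^ 2 : ℝ)
        : ℂ) := by
  simp only [curvatureSummand, hsym i k j, hsym j k i, hsym k j i, Complex.ofReal_add,
    Complex.ofReal_pow, ← Complex.mul_conj', map_add]
  ring

theorem curvatureSummand_sum_pair (i j : ι) :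
    curvatureSummand u j j i + curvatureSummand u j i j + curvatureSummand u i j j =
      ((‖u i j j + u j i j‖ ^ 2 + 2 * ‖u j i j‖ ^ 2 : ℝ) : ℂ) := by
  simp only [curvatureSummand, hsym j j i, Complex.ofReal_add, Complex.ofReal_mul,
    Complex.ofReal_ofNat, Complex.ofReal_pow, ← Complex.mul_conj', map_add]
  ring

end Curvature

/-- Decomposition of the hermitian form `Θ(u) = Σ_{i,j,k} (u^i_{jk} conj(u^j_{ik}) + |u^j_{ik}|²)`
(the curvature `Θ_{Q_n(1)}` on the Lagrangian Grassmannian) into the blocks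
`Θ_{ijk}` (for `i<j<k`), `Θ_{ij}` (for `i≠j`) and `Θ_i`, as in the proof of
Proposition 3.2 of the paper. -/
theorem lagrangian_curvature_decomposition (n : ℕ) (u : Fin n → Fin n → Fin n → ℂ)
    (hsym : ∀ i j k, u i j k = u i k j) :
    (∑ i : Fin n, ∑ j : Fin n, ∑ k : Fin n,
        (u i j k * (starRingEnd ℂ) (u j i k) + ((‖u j i k‖ ^ 2 : ℝ) : ℂ))) =
    ((((∑ i : Fin n, ∑ j : Fin n, ∑ k : Fin n,
          if i < j ∧ j < k then
            ‖u i j k + u j i k + u k i j‖ ^ 2 + ‖u i j k‖ ^ 2 +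
              ‖u j i k‖ ^ 2 + ‖u k i j‖ ^ 2
          else 0) +
        (∑ i : Fin n, ∑ j : Fin n,
          if i ≠ j then
            ‖u i j j + u j i j‖ ^ 2 + 2 * ‖u j i j‖ ^ 2
          else 0) +
        ∑ i : Fin n, 2 * ‖u i i i‖ ^ 2 : ℝ)) : ℂ) := by
  refine (sum_sum_sum_eq_sum_lt_lt_add_sum_ne_add_sum (curvatureSummand u)).trans ?_
  simp only [curvatureSummand_sum_perm hsym, curvatureSummand_sum_pair hsym,
    curvatureSummand_diag, Complex.ofReal_add, Complex.ofReal_sum, apply_ite Complex.ofReal,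
    Complex.ofReal_zero]
end

section
/- Let μ be a Young diagram, m ∈ ℕ, and T a semistandard Young tableau of shape μ with T i j < m for every cell (i, j) of μ, and suppose μ has exactly m rows (μ.colLen 0 = m). Then there exist a Young diagram ν and a semistandard Young tableau S of shape ν such that: (a) ν.rowLen i = μ.rowLen i − 1 for every i; (b) S i j < m for every cell (i, j) of ν; and (c) for every t < m, the weight satisfies w_t(S) = w_t(T) − 1 (in particular w_t(T) ≥ 1 for every t < m). (Combinatorial form of the second assertion of the paper's Lemma 3.3: removing the first column of a tableau of shape λ and weight (k_1,…,k_m) with l(λ) = m produces a tableau of weight (k_1−1,…,k_m−1).) -/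
namespace RemoveColAux

lemma mem_aux (μ : YoungDiagram) (i j : ℕ) :
    (i, j) ∈ (μ.cells.filter (fun c => c.2 ≠ 0)).image (fun c => (c.1, c.2 - 1)) ↔
      (i, j + 1) ∈ μ := by
  simp only [Finset.mem_image, Finset.mem_filter, YoungDiagram.mem_cells]
  constructor
  · rintro ⟨⟨a, b⟩, ⟨hab, hb⟩, heq⟩
    obtain ⟨rfl, rfl⟩ : a = i ∧ b - 1 = j := by
      simpa [Prod.ext_iff] using heq
    have hb1 : b - 1 + 1 = b := by omega
    rwa [hb1]
  · intro h
    exact ⟨(i, j + 1), ⟨h, by simp⟩, by simp⟩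

def removeCol (μ : YoungDiagram) : YoungDiagram where
  cells := (μ.cells.filter (fun c => c.2 ≠ 0)).image (fun c => (c.1, c.2 - 1))
  isLowerSet := by
    rintro ⟨i2, j2⟩ ⟨i1, j1⟩ ⟨h1, h2⟩ hmem
    rw [Finset.mem_coe, mem_aux] at hmem ⊢
    exact μ.up_left_mem h1 (by simpa using h2) hmem

lemma mem_removeCol (μ : YoungDiagram) (i j : ℕ) :
    (i, j) ∈ removeCol μ ↔ (i, j + 1) ∈ μ := by
  rw [← YoungDiagram.mem_cells]
  exact mem_aux μ i j

def removeColT (μ : YoungDiagram) (T : SemistandardYoungTableau μ) :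
    SemistandardYoungTableau (removeCol μ) where
  entry i j := T i (j + 1)
  row_weak' hj hcell := T.row_weak (by omega) ((mem_removeCol μ _ _).mp hcell)
  col_strict' hi hcell := T.col_strict hi ((mem_removeCol μ _ _).mp hcell)
  zeros' not_cell := T.zeros (fun h => not_cell ((mem_removeCol μ _ _).mpr h))

lemma col0_mono (μ : YoungDiagram) (T : SemistandardYoungTableau μ) :
    ∀ d i, (i + d, 0) ∈ μ → T i 0 + d ≤ T (i + d) 0 := by
  intro d
  induction d with
  | zero => intro i _; simp
  | succ d ih =>
    intro i h
    have hmem : (i + d, 0) ∈ μ := μ.up_left_mem (by omega) le_rfl h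
    have := ih i hmem
    have h' : (i + d + 1, 0) ∈ μ := by
      have e : i + d + 1 = i + (d + 1) := by omega
      rw [e]; exact h
    have h2 : T (i + d) 0 < T (i + d + 1) 0 := T.col_strict (by omega) h'
    have e : i + (d + 1) = i + d + 1 := by omega
    rw [e]
    omega

lemma col0_eq (μ : YoungDiagram) (m : ℕ) (T : SemistandardYoungTableau μ)
    (hT : ∀ i j, (i, j) ∈ μ → T i j < m) (hlen : μ.colLen 0 = m)
    {i : ℕ} (hi : i < m) : T i 0 = i := by
  have hmem : ∀ k, k < m → (k, 0) ∈ μ := by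
    intro k hk
    rw [YoungDiagram.mem_iff_lt_colLen, hlen]; exact hk
  have h1 : T 0 0 + i ≤ T i 0 := by
    simpa using col0_mono μ T i 0 (by simpa using hmem i hi)
  have h2 : T i 0 + (m - 1 - i) ≤ T (i + (m - 1 - i)) 0 :=
    col0_mono μ T (m - 1 - i) i (by
      have : i + (m - 1 - i) = m - 1 := by omega
      rw [this]; exact hmem _ (by omega))
  have h3 : T (i + (m - 1 - i)) 0 < m := hT _ _ (hmem _ (by omega))
  omega

end RemoveColAux

open RemoveColAux in
/-- Second assertion of Lemma 3.3 (combinatorial form): removing the first column of a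
semistandard Young tableau `T` of shape `μ` with `m` rows and all entries `< m` produces a
semistandard tableau `S` of a shape `ν` with `ν.rowLen i = μ.rowLen i - 1`, all entries `< m`,
and each weight `w_t` (number of cells with entry `t`), for `t < m`, decreased by one. -/
theorem ssyt_remove_first_column (μ : YoungDiagram) (m : ℕ)
    (T : SemistandardYoungTableau μ)
    (hT : ∀ i j, (i, j) ∈ μ → T i j < m)
    (hlen : μ.colLen 0 = m) :
    ∃ (ν : YoungDiagram) (S : SemistandardYoungTableau ν),
      (∀ i, ν.rowLen i = μ.rowLen i - 1) ∧
      (∀ i j, (i, j) ∈ ν → S i j < m) ∧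
      (∀ t, t < m →
        1 ≤ (μ.cells.filter (fun c => T c.1 c.2 = t)).card ∧
        (ν.cells.filter (fun c => S c.1 c.2 = t)).card =
          (μ.cells.filter (fun c => T c.1 c.2 = t)).card - 1) := by
  refine ⟨removeCol μ, removeColT μ T, ?_, ?_, ?_⟩
  · intro i
    have key : ∀ j, j < (removeCol μ).rowLen i ↔ j < μ.rowLen i - 1 := by
      intro j
      rw [← YoungDiagram.mem_iff_lt_rowLen, mem_removeCol, YoungDiagram.mem_iff_lt_rowLen]
      omega
    rcases Nat.lt_trichotomy ((removeCol μ).rowLen i) (μ.rowLen i - 1) with h | h | h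
    · exact absurd ((key _).mpr h) (lt_irrefl _)
    · exact h
    · exact absurd ((key _).mp h) (lt_irrefl _)
  · intro i j hij
    exact hT i (j + 1) ((mem_removeCol μ i j).mp hij)
  · intro t ht
    have hmemt : (t, 0) ∈ μ := by
      rw [YoungDiagram.mem_iff_lt_colLen, hlen]; exact ht
    have hcol0 : ∀ {i : ℕ}, i < m → T i 0 = i := fun {i} => col0_eq μ m T hT hlen
    set A := μ.cells.filter (fun c => T c.1 c.2 = t) with hA
    have htA : (t, 0) ∈ A := by
      rw [hA, Finset.mem_filter, YoungDiagram.mem_cells]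
      exact ⟨hmemt, hcol0 ht⟩
    constructor
    · exact Finset.one_le_card.mpr ⟨_, htA⟩
    -- split A by whether the column is 0
    have hsplit : (A.filter (fun c => c.2 = 0)).card + (A.filter (fun c => ¬ c.2 = 0)).card
        = A.card := Finset.card_filter_add_card_filter_not _
    have hzero : A.filter (fun c => c.2 = 0) = {(t, 0)} := by
      ext ⟨a, b⟩
      simp only [hA, Finset.mem_filter, Finset.mem_singleton, YoungDiagram.mem_cells,
        Prod.ext_iff]
      constructor
      · rintro ⟨⟨hmem, hval⟩, rfl⟩
        have ha : a < m := by
          rw [YoungDiagram.mem_iff_lt_colLen, hlen] at hmem; exact hmem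
        exact ⟨by rw [← hval]; exact (hcol0 ha).symm, rfl⟩
      · rintro ⟨rfl, rfl⟩
        exact ⟨⟨hmemt, hcol0 ht⟩, rfl⟩
    have hbij : ((removeCol μ).cells.filter
        (fun c => (removeColT μ T) c.1 c.2 = t)).card
        = (A.filter (fun c => ¬ c.2 = 0)).card := by
      apply Finset.card_bij (fun c _ => (c.1, c.2 + 1))
      · rintro ⟨a, b⟩ hc
        simp only [Finset.mem_filter, YoungDiagram.mem_cells] at hc
        simp only [hA, Finset.mem_filter, YoungDiagram.mem_cells]
        refine ⟨⟨(mem_removeCol μ a b).mp hc.1, hc.2⟩, by simp⟩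
      · rintro ⟨a, b⟩ _ ⟨a', b'⟩ _ h
        simpa [Prod.ext_iff] using h
      · rintro ⟨a, b⟩ hc
        simp only [hA, Finset.mem_filter, YoungDiagram.mem_cells] at hc
        obtain ⟨⟨hmem, hval⟩, hb⟩ := hc
        refine ⟨(a, b - 1), ?_, ?_⟩
        · simp only [Finset.mem_filter, YoungDiagram.mem_cells]
          constructor
          · rw [mem_removeCol]
            have : b - 1 + 1 = b := by omega
            rw [this]; exact hmem
          · show T a (b - 1 + 1) = t
            have : b - 1 + 1 = b := by omega
            rw [this]; exact hval
        · simp [Prod.ext_iff]; omega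
    rw [hbij]
    have h1 : (A.filter (fun c => c.2 = 0)).card = 1 := by rw [hzero]; simp
    omega
end
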